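/- Let W, W̃ be n×k real matrices with orthonormal columns. Then ‖WW^T − W̃W̃^T‖_2 ≤ min{‖W̃U − W‖_F : U ∈ O(k)} ≤ √(2k) · ‖WW^T − W̃W̃^T‖_2, where ‖·‖_2 is the spectral norm and ‖·‖_F the Frobenius norm. -/

import Mathlib

open Matrix

noncomputable def rnorm {k : ℕ} (v : Fin k → ℝ) : ℝ := Real.sqrt (∑ j, v j ^ 2)

/-- two-to-infinity norm: maximum Euclidean norm of the rows -/
noncomputable def twoInf {n k : ℕ} (B : Matrix (Fin n) (Fin k) ℝ) : ℝ := ⨆ i, rnorm (B i)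

/-- Frobenius norm -/
noncomputable def frob {n k : ℕ} (B : Matrix (Fin n) (Fin k) ℝ) : ℝ :=
  Real.sqrt (∑ i, ∑ j, B i j ^ 2)

/-- maximum absolute row-sum norm -/
noncomputable def rowSumNorm {n k : ℕ} (B : Matrix (Fin n) (Fin k) ℝ) : ℝ := ⨆ i, ∑ j, |B i j|

/-- spectral norm: operator norm induced by Euclidean vector norms -/
noncomputable def specNorm {m n : ℕ} (B : Matrix (Fin m) (Fin n) ℝ) : ℝ :=
  ‖(Matrix.toEuclideanLin B).toContinuousLinearMap‖

/-- vector sup norm -/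
noncomputable def vecInf {n : ℕ} (v : Fin n → ℝ) : ℝ := ⨆ i, |v i|

/-- smallest singular value, via σ_min(B) = inf over unit v of ‖vᵀB‖₂ -/
noncomputable def sigmaMin {l : ℕ} (B : Matrix (Fin l) (Fin l) ℝ) : ℝ :=
  ⨅ v : {v : Fin l → ℝ // rnorm v = 1}, rnorm (Matrix.vecMul v.1 B)

/-!
Write `P = WWᵀ`, `Q = W̃W̃ᵀ` and `M = WᵀW̃`. For orthogonal `U` and `E = W̃U - W`, the components of
`(P - Q)x` along and across the column space of `W` are `-Eᵀ(1 - Q)x` and `-(1 - P)E(UᵀW̃ᵀx)`;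
Pythagoras, once for `P` and once for `Q`, gives `‖P - Q‖₂ ≤ ‖E‖_F`.

Conversely `‖W̃U - W‖_F² = 2k - 2 tr(MU)` and `‖P - Q‖_F² = 2k - 2 tr(MᵀM)`. Taking `U` from the
polar decomposition `M = V √(MᵀM)` makes `tr(MU)` the sum of the singular values of the contraction
`M`, which dominates the sum `tr(MᵀM)` of their squares. Finally `P - Q` anticommutes with
`P + Q - 1`, so `‖P - Q‖_F² = ‖(P - Q)W‖_F² + ‖(P - Q)W̃‖_F² ≤ 2k ‖P - Q‖₂²`.
-/

section DotProduct

variable {m n : Type*} [Fintype m] [Fintype n]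

lemma dotProduct_self_nonneg (v : n → ℝ) : 0 ≤ v ⬝ᵥ v :=
  Finset.sum_nonneg fun i _ => mul_self_nonneg (v i)

lemma mulVec_dotProduct_mulVec (A : Matrix m n ℝ) (u v : n → ℝ) :
    (A *ᵥ u) ⬝ᵥ (A *ᵥ v) = u ⬝ᵥ (Aᵀ * A) *ᵥ v := by
  rw [← mulVec_mulVec, dotProduct_mulVec u Aᵀ, vecMul_transpose]

lemma norm_toLp_sq (v : n → ℝ) : ‖WithLp.toLp 2 v‖ ^ 2 = v ⬝ᵥ v := by
  rw [EuclideanSpace.real_norm_sq_eq]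
  simp [dotProduct, sq]

variable [DecidableEq n] {W : Matrix m n ℝ}

lemma mulVec_dotProduct_self_of_transpose_mul_self (hW : Wᵀ * W = 1) (v : n → ℝ) :
    (W *ᵥ v) ⬝ᵥ (W *ᵥ v) = v ⬝ᵥ v := by
  rw [mulVec_dotProduct_mulVec, hW, one_mulVec]

lemma dotProduct_self_eq_add_of_transpose_mul_self (hW : Wᵀ * W = 1) (y : m → ℝ) :
    y ⬝ᵥ y = (Wᵀ *ᵥ y) ⬝ᵥ (Wᵀ *ᵥ y) + (y - (W * Wᵀ) *ᵥ y) ⬝ᵥ (y - (W * Wᵀ) *ᵥ y) := by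
  have hproj : y ⬝ᵥ (W * Wᵀ) *ᵥ y = (Wᵀ *ᵥ y) ⬝ᵥ (Wᵀ *ᵥ y) := by
    rw [mulVec_dotProduct_mulVec, transpose_transpose]
  have hnorm : ((W * Wᵀ) *ᵥ y) ⬝ᵥ ((W * Wᵀ) *ᵥ y) = (Wᵀ *ᵥ y) ⬝ᵥ (Wᵀ *ᵥ y) := by
    rw [← mulVec_mulVec, mulVec_dotProduct_self_of_transpose_mul_self hW]
  have hsymm : ((W * Wᵀ) *ᵥ y) ⬝ᵥ y = y ⬝ᵥ (W * Wᵀ) *ᵥ y := dotProduct_comm _ _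
  simp only [sub_dotProduct, dotProduct_sub, hnorm, hsymm, hproj]
  ring

lemma transpose_mulVec_dotProduct_self_le (hW : Wᵀ * W = 1) (y : m → ℝ) :
    (Wᵀ *ᵥ y) ⬝ᵥ (Wᵀ *ᵥ y) ≤ y ⬝ᵥ y := by
  rw [dotProduct_self_eq_add_of_transpose_mul_self hW y]
  exact le_add_of_nonneg_right (dotProduct_self_nonneg _)

lemma sub_mulVec_dotProduct_self_le (hW : Wᵀ * W = 1) (y : m → ℝ) :
    (y - (W * Wᵀ) *ᵥ y) ⬝ᵥ (y - (W * Wᵀ) *ᵥ y) ≤ y ⬝ᵥ y := by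
  rw [dotProduct_self_eq_add_of_transpose_mul_self hW y]
  exact le_add_of_nonneg_left (dotProduct_self_nonneg _)

end DotProduct

section Polar

variable {ι : Type*} [Fintype ι] [DecidableEq ι]

lemma transpose_mul_self_eq_one_of_dotProduct {V : Matrix ι ι ℝ}
    (h : ∀ x y, (V *ᵥ x) ⬝ᵥ (V *ᵥ y) = x ⬝ᵥ y) : Vᵀ * V = 1 := by
  ext i j
  have hij := h (Pi.single i 1) (Pi.single j 1)
  rw [mulVec_dotProduct_mulVec] at hij
  simpa [one_apply, Pi.single_apply, eq_comm] using hij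

/-- The isometry `B x ↦ A x` of the range of `B` extends to an isometry of the whole space. -/
lemma exists_orthogonal_mul_eq_of_transpose_mul_self_eq {A B : Matrix ι ι ℝ}
    (h : Aᵀ * A = Bᵀ * B) : ∃ V : Matrix ι ι ℝ, Vᵀ * V = 1 ∧ A = V * B := by
  set TA := toEuclideanLin A
  set TB := toEuclideanLin B
  have hnorm : ∀ x, ‖TA x‖ = ‖TB x‖ := fun x => by
    refine (sq_eq_sq₀ (norm_nonneg _) (norm_nonneg _)).mp ?_
    change ‖WithLp.toLp 2 (A *ᵥ x.ofLp)‖ ^ 2 = ‖WithLp.toLp 2 (B *ᵥ x.ofLp)‖ ^ 2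
    rw [norm_toLp_sq, norm_toLp_sq, mulVec_dotProduct_mulVec, mulVec_dotProduct_mulVec, h]
  have hker : LinearMap.ker TB ≤ LinearMap.ker TA := fun x hx => by
    rw [LinearMap.mem_ker, ← norm_eq_zero, hnorm, norm_eq_zero]
    exact hx
  set L₀ := (LinearMap.ker TB).liftQ TA hker ∘ₗ TB.quotKerEquivRange.symm.toLinearMap
  have hL₀ : ∀ x, L₀ ⟨TB x, LinearMap.mem_range_self TB x⟩ = TA x := fun x => by
    have hx : TB.quotKerEquivRange.symm ⟨TB x, LinearMap.mem_range_self TB x⟩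
        = Submodule.Quotient.mk x := by
      rw [LinearEquiv.symm_apply_eq]
      exact Subtype.ext (TB.quotKerEquivRange_apply_mk x).symm
    simp only [L₀, LinearMap.comp_apply, LinearEquiv.coe_coe, hx, Submodule.liftQ_apply]
  let L : LinearMap.range TB →ₗᵢ[ℝ] EuclideanSpace ℝ ι :=
    { toLinearMap := L₀
      norm_map' := by
        rintro ⟨_, x, rfl⟩
        rw [hL₀, hnorm]
        rfl }
  set V := toEuclideanLin.symm L.extend.toLinearMap
  have hV : ∀ v, V *ᵥ v = (L.extend (WithLp.toLp 2 v)).ofLp := fun v => by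
    change (toEuclideanLin V (WithLp.toLp 2 v)).ofLp = _
    rw [LinearEquiv.apply_symm_apply]
    rfl
  refine ⟨V, transpose_mul_self_eq_one_of_dotProduct fun x y => ?_, mulVec_injective ?_⟩
  · have h := L.extend.inner_map_map (WithLp.toLp 2 y) (WithLp.toLp 2 x)
    rw [hV, hV]
    exact h
  · funext x
    rw [← mulVec_mulVec, hV]
    have h := L.extend_apply ⟨TB (WithLp.toLp 2 x), LinearMap.mem_range_self TB _⟩
    exact (congrArg WithLp.ofLp (h.trans (hL₀ _))).symm

end Polar

lemma transpose_eq_of_posSemidef {ι : Type*} {S : Matrix ι ι ℝ} (hS : S.PosSemidef) : Sᵀ = S := by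
  simpa [conjTranspose_eq_transpose_of_trivial] using hS.1.eq

section Contraction

variable {ι : Type*} [Fintype ι]

lemma dotProduct_sq_le (u v : ι → ℝ) : (u ⬝ᵥ v) ^ 2 ≤ (u ⬝ᵥ u) * (v ⬝ᵥ v) := by
  simpa [dotProduct, sq] using Finset.sum_mul_sq_le_sq_mul_sq Finset.univ u v

variable [DecidableEq ι]

open scoped MatrixOrder in
/-- With `R = √S`: Cauchy–Schwarz for `‖S y‖² = ⟪R y, R (S y)⟫`, and `‖R z‖ ≤ ‖z‖`. -/
lemma mulVec_dotProduct_self_le_of_posSemidef {S : Matrix ι ι ℝ} (hS : S.PosSemidef)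
    (hcontr : ∀ v, (S *ᵥ v) ⬝ᵥ (S *ᵥ v) ≤ v ⬝ᵥ v) (y : ι → ℝ) :
    (S *ᵥ y) ⬝ᵥ (S *ᵥ y) ≤ y ⬝ᵥ S *ᵥ y := by
  set R := CFC.sqrt S
  have hRR : Rᵀ * R = S := by
    rw [transpose_eq_of_posSemidef (CFC.sqrt_nonneg S).posSemidef]
    exact CFC.sqrt_mul_sqrt_self S hS.nonneg
  have hR : ∀ v, (R *ᵥ v) ⬝ᵥ (R *ᵥ v) = v ⬝ᵥ S *ᵥ v := fun v => by
    rw [mulVec_dotProduct_mulVec, hRR]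
  set z := S *ᵥ y
  have hz : z ⬝ᵥ z = (R *ᵥ y) ⬝ᵥ (R *ᵥ z) := by
    rw [mulVec_dotProduct_mulVec R y z, hRR, dotProduct_mulVec, ← mulVec_transpose,
      transpose_eq_of_posSemidef hS]
    exact dotProduct_comm _ _
  have hRz : (R *ᵥ z) ⬝ᵥ (R *ᵥ z) ≤ z ⬝ᵥ z := by
    have hcs := (dotProduct_sq_le z (S *ᵥ z)).trans
      (mul_le_mul_of_nonneg_left (hcontr z) (dotProduct_self_nonneg z))
    rw [← hR] at hcs
    nlinarith [dotProduct_self_nonneg (R *ᵥ z), dotProduct_self_nonneg z]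
  have hcs := dotProduct_sq_le (R *ᵥ y) (R *ᵥ z)
  rw [← hz, hR y] at hcs
  nlinarith [dotProduct_self_nonneg z, hR y ▸ dotProduct_self_nonneg (R *ᵥ y),
    dotProduct_self_nonneg (R *ᵥ z)]

lemma trace_mul_self_le_trace_of_posSemidef {S : Matrix ι ι ℝ} (hS : S.PosSemidef)
    (hcontr : ∀ v, (S *ᵥ v) ⬝ᵥ (S *ᵥ v) ≤ v ⬝ᵥ v) : (S * S).trace ≤ S.trace := by
  have hSt := transpose_eq_of_posSemidef hS
  have hdiff : (S - S * S).PosSemidef := by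
    refine .of_dotProduct_mulVec_nonneg ?_ fun v => ?_
    · simp [IsHermitian, conjTranspose_eq_transpose_of_trivial, hSt]
    · have h := mulVec_dotProduct_self_le_of_posSemidef hS hcontr v
      rw [mulVec_dotProduct_mulVec, hSt] at h
      simpa [sub_mulVec, dotProduct_sub] using h
  linarith [hdiff.trace_nonneg, trace_sub S (S * S)]

open scoped MatrixOrder in
lemma exists_orthogonal_trace_transpose_mul_self_le {M : Matrix ι ι ℝ}
    (hM : ∀ v, (M *ᵥ v) ⬝ᵥ (M *ᵥ v) ≤ v ⬝ᵥ v) :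
    ∃ U : Matrix ι ι ℝ, Uᵀ * U = 1 ∧ (Mᵀ * M).trace ≤ (M * U).trace := by
  set S := CFC.sqrt (Mᵀ * M)
  have hS : S.PosSemidef := (CFC.sqrt_nonneg _).posSemidef
  have hSt := transpose_eq_of_posSemidef hS
  have hMM : 0 ≤ Mᵀ * M := by
    simpa [conjTranspose_eq_transpose_of_trivial] using (posSemidef_conjTranspose_mul_self M).nonneg
  have hSS : S * S = Mᵀ * M := CFC.sqrt_mul_sqrt_self _ hMM
  obtain ⟨V, hV, hMV⟩ := exists_orthogonal_mul_eq_of_transpose_mul_self_eq (A := M) (B := S)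
    (by rw [hSt, hSS])
  have hcontr : ∀ v, (S *ᵥ v) ⬝ᵥ (S *ᵥ v) ≤ v ⬝ᵥ v := fun v => by
    rw [mulVec_dotProduct_mulVec, hSt, hSS, ← mulVec_dotProduct_mulVec]
    exact hM v
  refine ⟨Vᵀ, by rw [transpose_transpose]; exact mul_eq_one_comm.mp hV, ?_⟩
  calc (Mᵀ * M).trace = (S * S).trace := by rw [hSS]
    _ ≤ S.trace := trace_mul_self_le_trace_of_posSemidef hS hcontr
    _ = (M * Vᵀ).trace := by
      rw [hMV, Matrix.mul_assoc, trace_mul_comm, Matrix.mul_assoc, hV, Matrix.mul_one]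

end Contraction

lemma sub_mul_add_sub_one_eq_neg {R : Type*} [Ring R] {p q : R} (hp : IsIdempotentElem p)
    (hq : IsIdempotentElem q) : (p - q) * (p + q - 1) = -((p + q - 1) * (p - q)) := by
  simp only [mul_sub, sub_mul, mul_add, add_mul, hp.eq, hq.eq, mul_one, one_mul]
  abel

lemma trace_sub_mul_sub_eq_add {n : Type*} [Fintype n] [DecidableEq n] {P Q : Matrix n n ℝ}
    (hP : IsIdempotentElem P) (hQ : IsIdempotentElem Q) :
    ((P - Q) * (P - Q)).trace = ((P - Q) * (P - Q) * P).trace + ((P - Q) * (P - Q) * Q).trace := by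
  set D := P - Q
  set S := P + Q - 1
  have hzero : (D * D * S).trace = 0 := by
    have h : (D * D * S).trace = -(D * D * S).trace :=
      calc (D * D * S).trace = (D * (D * S)).trace := by rw [Matrix.mul_assoc]
        _ = -(D * (S * D)).trace := by
          rw [sub_mul_add_sub_one_eq_neg hP hQ, Matrix.mul_neg, trace_neg]
        _ = -(D * D * S).trace := by
          rw [trace_mul_comm D, Matrix.mul_assoc, trace_mul_comm S]
    linarith
  rw [Matrix.mul_sub, Matrix.mul_add, Matrix.mul_one, trace_sub, trace_add] at hzero
  linarith

section Norms

variable {l m n : ℕ}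

lemma frob_sq (B : Matrix (Fin m) (Fin n) ℝ) : frob B ^ 2 = ∑ i, ∑ j, B i j ^ 2 :=
  Real.sq_sqrt (by positivity)

lemma frob_nonneg (B : Matrix (Fin m) (Fin n) ℝ) : 0 ≤ frob B := Real.sqrt_nonneg _

lemma frob_sq_eq_trace (B : Matrix (Fin m) (Fin n) ℝ) : frob B ^ 2 = (Bᵀ * B).trace := by
  rw [frob_sq, Finset.sum_comm]
  simp [trace, mul_apply, sq]

lemma frob_transpose (B : Matrix (Fin m) (Fin n) ℝ) : frob Bᵀ = frob B := by
  rw [frob, frob, Finset.sum_comm]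
  rfl

lemma frob_sq_eq_sum_mulVec_single (B : Matrix (Fin m) (Fin n) ℝ) :
    frob B ^ 2 = ∑ j, (B *ᵥ Pi.single j 1) ⬝ᵥ (B *ᵥ Pi.single j 1) := by
  rw [frob_sq, Finset.sum_comm]
  simp [dotProduct, sq]

lemma mulVec_dotProduct_self_le_frob_sq (B : Matrix (Fin m) (Fin n) ℝ) (v : Fin n → ℝ) :
    (B *ᵥ v) ⬝ᵥ (B *ᵥ v) ≤ frob B ^ 2 * (v ⬝ᵥ v) := by
  rw [frob_sq, Finset.sum_mul]
  refine Finset.sum_le_sum fun i _ => ?_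
  simpa [mulVec, dotProduct, sq] using Finset.sum_mul_sq_le_sq_mul_sq Finset.univ (B i) v

lemma specNorm_nonneg (B : Matrix (Fin m) (Fin n) ℝ) : 0 ≤ specNorm B := norm_nonneg _

lemma mulVec_dotProduct_self_le_specNorm_sq (B : Matrix (Fin m) (Fin n) ℝ) (v : Fin n → ℝ) :
    (B *ᵥ v) ⬝ᵥ (B *ᵥ v) ≤ specNorm B ^ 2 * (v ⬝ᵥ v) := by
  have h := (toEuclideanLin B).toContinuousLinearMap.le_opNorm (WithLp.toLp 2 v)
  rw [← norm_toLp_sq, ← norm_toLp_sq, ← mul_pow]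
  exact pow_le_pow_left₀ (norm_nonneg _) h 2

lemma specNorm_le_of_mulVec_dotProduct_self_le (B : Matrix (Fin m) (Fin n) ℝ) {c : ℝ}
    (hc : 0 ≤ c) (h : ∀ v, (B *ᵥ v) ⬝ᵥ (B *ᵥ v) ≤ c ^ 2 * (v ⬝ᵥ v)) : specNorm B ≤ c := by
  refine ContinuousLinearMap.opNorm_le_bound _ hc fun x => ?_
  have hx := h x.ofLp
  rw [← norm_toLp_sq, ← norm_toLp_sq, WithLp.toLp_ofLp, ← mul_pow] at hx
  exact pow_le_pow_iff_left₀ (norm_nonneg _) (by positivity) two_ne_zero |>.mp hx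

lemma frob_mul_sq_le (A : Matrix (Fin l) (Fin m) ℝ) (B : Matrix (Fin m) (Fin n) ℝ) :
    frob (A * B) ^ 2 ≤ specNorm A ^ 2 * frob B ^ 2 := by
  rw [frob_sq_eq_sum_mulVec_single, frob_sq_eq_sum_mulVec_single, Finset.mul_sum]
  refine Finset.sum_le_sum fun j _ => ?_
  rw [← mulVec_mulVec]
  exact mulVec_dotProduct_self_le_specNorm_sq A _

end Norms

section Orthonormal

variable {n k : ℕ} {W Wt : Matrix (Fin n) (Fin k) ℝ}

lemma isIdempotentElem_mul_transpose (hW : Wᵀ * W = 1) : IsIdempotentElem (W * Wᵀ) := by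
  rw [IsIdempotentElem, Matrix.mul_assoc, ← Matrix.mul_assoc Wᵀ, hW, Matrix.one_mul]

lemma transpose_mulVec_dotProduct_self_le_frob_sq (U : Matrix (Fin k) (Fin k) ℝ) {a : Fin n → ℝ}
    (ha : Wtᵀ *ᵥ a = 0) :
    (Wᵀ *ᵥ a) ⬝ᵥ (Wᵀ *ᵥ a) ≤ frob (Wt * U - W) ^ 2 * (a ⬝ᵥ a) := by
  have hWa : Wᵀ *ᵥ a = -((Wt * U - W)ᵀ *ᵥ a) := by
    rw [transpose_sub, transpose_mul, sub_mulVec, ← mulVec_mulVec, ha, mulVec_zero, zero_sub,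
      neg_neg]
  rw [hWa, neg_dotProduct_neg, ← frob_transpose]
  exact mulVec_dotProduct_self_le_frob_sq _ a

lemma mulVec_sub_dotProduct_self_le_frob_sq (hW : Wᵀ * W = 1) {U : Matrix (Fin k) (Fin k) ℝ}
    (hU : Uᵀ * U = 1) (z : Fin k → ℝ) :
    (Wt *ᵥ z - (W * Wᵀ) *ᵥ (Wt *ᵥ z)) ⬝ᵥ (Wt *ᵥ z - (W * Wᵀ) *ᵥ (Wt *ᵥ z)) ≤
      frob (Wt * U - W) ^ 2 * (z ⬝ᵥ z) := by
  set E := Wt * U - W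
  have hperp : Wt - W * Wᵀ * Wt = (E - W * Wᵀ * E) * Uᵀ := by
    simp only [E, Matrix.mul_sub, Matrix.sub_mul, Matrix.mul_assoc, mul_eq_one_comm.mp hU,
      Matrix.mul_one]
    rw [← Matrix.mul_assoc Wᵀ W, hW, Matrix.one_mul]
    abel
  have hz : Wt *ᵥ z - (W * Wᵀ) *ᵥ (Wt *ᵥ z) = E *ᵥ (Uᵀ *ᵥ z) - (W * Wᵀ) *ᵥ (E *ᵥ (Uᵀ *ᵥ z)) := by
    rw [mulVec_mulVec, ← sub_mulVec, hperp]
    simp only [Matrix.sub_mul, sub_mulVec, mulVec_mulVec, Matrix.mul_assoc]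
  have hUt : Uᵀᵀ * Uᵀ = 1 := by rwa [transpose_transpose, ← mul_eq_one_comm]
  rw [hz, ← mulVec_dotProduct_self_of_transpose_mul_self hUt z]
  exact (sub_mulVec_dotProduct_self_le hW _).trans (mulVec_dotProduct_self_le_frob_sq E _)

lemma specNorm_mul_transpose_sub_le_frob {U : Matrix (Fin k) (Fin k) ℝ} (hW : Wᵀ * W = 1)
    (hWt : Wtᵀ * Wt = 1) (hU : Uᵀ * U = 1) :
    specNorm (W * Wᵀ - Wt * Wtᵀ) ≤ frob (Wt * U - W) := by
  set Δ := W * Wᵀ - Wt * Wtᵀ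
  refine specNorm_le_of_mulVec_dotProduct_self_le Δ (frob_nonneg _) fun x => ?_
  have hpar : Wᵀ *ᵥ (Δ *ᵥ x) = Wᵀ *ᵥ (x - (Wt * Wtᵀ) *ᵥ x) := by
    have h : Wᵀ * Δ = Wᵀ * (1 - Wt * Wtᵀ) := by
      rw [Matrix.mul_sub, Matrix.mul_sub, ← Matrix.mul_assoc, hW, Matrix.one_mul, Matrix.mul_one]
    rw [mulVec_mulVec, h, ← mulVec_mulVec, sub_mulVec, one_mulVec]
  have hker : Wtᵀ *ᵥ (x - (Wt * Wtᵀ) *ᵥ x) = 0 := by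
    rw [mulVec_sub, mulVec_mulVec, ← Matrix.mul_assoc, hWt, Matrix.one_mul, sub_self]
  have hperp : Δ *ᵥ x - (W * Wᵀ) *ᵥ (Δ *ᵥ x)
      = -(Wt *ᵥ (Wtᵀ *ᵥ x) - (W * Wᵀ) *ᵥ (Wt *ᵥ (Wtᵀ *ᵥ x))) := by
    have h : Δ - W * Wᵀ * Δ = -(Wt * Wtᵀ - W * Wᵀ * (Wt * Wtᵀ)) := by
      simp only [Δ, Matrix.mul_sub, (isIdempotentElem_mul_transpose hW).eq]
      abel
    simpa only [sub_mulVec, neg_mulVec, ← mulVec_mulVec] using congrArg (· *ᵥ x) h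
  calc (Δ *ᵥ x) ⬝ᵥ (Δ *ᵥ x)
      ≤ frob (Wt * U - W) ^ 2 * ((x - (Wt * Wtᵀ) *ᵥ x) ⬝ᵥ (x - (Wt * Wtᵀ) *ᵥ x))
        + frob (Wt * U - W) ^ 2 * ((Wtᵀ *ᵥ x) ⬝ᵥ (Wtᵀ *ᵥ x)) := by
        rw [dotProduct_self_eq_add_of_transpose_mul_self hW, hpar, hperp, neg_dotProduct_neg]
        exact add_le_add (transpose_mulVec_dotProduct_self_le_frob_sq U hker)
          (mulVec_sub_dotProduct_self_le_frob_sq hW hU _)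
    _ = frob (Wt * U - W) ^ 2 * (x ⬝ᵥ x) := by
        rw [dotProduct_self_eq_add_of_transpose_mul_self hWt x]
        ring

lemma trace_mul_transpose (hW : Wᵀ * W = 1) : (W * Wᵀ).trace = k := by
  rw [trace_mul_comm, hW, trace_one, Fintype.card_fin]

lemma frob_sq_of_transpose_mul_self (hW : Wᵀ * W = 1) : frob W ^ 2 = k := by
  rw [frob_sq_eq_trace, hW, trace_one, Fintype.card_fin]

lemma frob_sq_mul_sub (hW : Wᵀ * W = 1) (hWt : Wtᵀ * Wt = 1) {U : Matrix (Fin k) (Fin k) ℝ}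
    (hU : Uᵀ * U = 1) : frob (Wt * U - W) ^ 2 = 2 * k - 2 * (Wᵀ * Wt * U).trace := by
  have hcross : (Uᵀ * Wtᵀ * W).trace = (Wᵀ * Wt * U).trace := by
    rw [← trace_transpose]
    simp only [transpose_mul, transpose_transpose, Matrix.mul_assoc]
  have hsq : Uᵀ * Wtᵀ * (Wt * U) = 1 := by
    rw [Matrix.mul_assoc, ← Matrix.mul_assoc Wtᵀ, hWt, Matrix.one_mul, hU]
  rw [frob_sq_eq_trace, transpose_sub, transpose_mul, Matrix.sub_mul, Matrix.mul_sub,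
    Matrix.mul_sub, hsq, hW, ← Matrix.mul_assoc Wᵀ]
  simp only [trace_sub, trace_one, Fintype.card_fin, hcross]
  ring

lemma frob_sq_mul_transpose_sub (hW : Wᵀ * W = 1) (hWt : Wtᵀ * Wt = 1) :
    frob (W * Wᵀ - Wt * Wtᵀ) ^ 2 = 2 * k - 2 * ((Wᵀ * Wt)ᵀ * (Wᵀ * Wt)).trace := by
  have hcross : (W * Wᵀ * (Wt * Wtᵀ)).trace = ((Wᵀ * Wt)ᵀ * (Wᵀ * Wt)).trace := by
    rw [transpose_mul, transpose_transpose, ← Matrix.mul_assoc, trace_mul_comm]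
    simp only [Matrix.mul_assoc]
  rw [frob_sq_eq_trace, transpose_sub, transpose_mul, transpose_mul, transpose_transpose,
    transpose_transpose, Matrix.sub_mul, Matrix.mul_sub, Matrix.mul_sub,
    (isIdempotentElem_mul_transpose hW).eq, (isIdempotentElem_mul_transpose hWt).eq]
  simp only [trace_sub, trace_mul_transpose hW, trace_mul_transpose hWt, hcross]
  rw [trace_mul_comm (Wt * Wtᵀ), hcross]
  ring

lemma frob_sq_mul_transpose_sub_le (hW : Wᵀ * W = 1) (hWt : Wtᵀ * Wt = 1) :
    frob (W * Wᵀ - Wt * Wtᵀ) ^ 2 ≤ 2 * k * specNorm (W * Wᵀ - Wt * Wtᵀ) ^ 2 := by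
  set Δ := W * Wᵀ - Wt * Wtᵀ
  have hΔ : Δᵀ = Δ := by
    simp only [Δ, transpose_sub, transpose_mul, transpose_transpose]
  have hpart : ∀ V : Matrix (Fin n) (Fin k) ℝ, Vᵀ * V = 1 →
      (Δ * Δ * (V * Vᵀ)).trace ≤ k * specNorm Δ ^ 2 := fun V hV =>
    calc (Δ * Δ * (V * Vᵀ)).trace = frob (Δ * V) ^ 2 := by
          rw [frob_sq_eq_trace, transpose_mul, hΔ]
          simp only [Matrix.mul_assoc]
          rw [trace_mul_comm Vᵀ]
          simp only [Matrix.mul_assoc]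
      _ ≤ specNorm Δ ^ 2 * frob V ^ 2 := frob_mul_sq_le Δ V
      _ = k * specNorm Δ ^ 2 := by rw [frob_sq_of_transpose_mul_self hV, mul_comm]
  rw [frob_sq_eq_trace, hΔ, trace_sub_mul_sub_eq_add (isIdempotentElem_mul_transpose hW)
    (isIdempotentElem_mul_transpose hWt)]
  linarith [hpart W hW, hpart Wt hWt]

lemma exists_orthogonal_frob_sq_le (hW : Wᵀ * W = 1) (hWt : Wtᵀ * Wt = 1) :
    ∃ U : Matrix (Fin k) (Fin k) ℝ, Uᵀ * U = 1 ∧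
      frob (Wt * U - W) ^ 2 ≤ 2 * k * specNorm (W * Wᵀ - Wt * Wtᵀ) ^ 2 := by
  have hM : ∀ v, ((Wᵀ * Wt) *ᵥ v) ⬝ᵥ ((Wᵀ * Wt) *ᵥ v) ≤ v ⬝ᵥ v := fun v => by
    rw [← mulVec_mulVec, ← mulVec_dotProduct_self_of_transpose_mul_self hWt v]
    exact transpose_mulVec_dotProduct_self_le hW _
  obtain ⟨U, hU, htrace⟩ := exists_orthogonal_trace_transpose_mul_self_le hM
  refine ⟨U, hU, ?_⟩
  calc frob (Wt * U - W) ^ 2 = 2 * k - 2 * (Wᵀ * Wt * U).trace := frob_sq_mul_sub hW hWt hU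
    _ ≤ 2 * k - 2 * ((Wᵀ * Wt)ᵀ * (Wᵀ * Wt)).trace := by linarith
    _ = frob (W * Wᵀ - Wt * Wtᵀ) ^ 2 := (frob_sq_mul_transpose_sub hW hWt).symm
    _ ≤ 2 * k * specNorm (W * Wᵀ - Wt * Wtᵀ) ^ 2 := frob_sq_mul_transpose_sub_le hW hWt

end Orthonormal

theorem stmt13 {n k : ℕ} (W Wt : Matrix (Fin n) (Fin k) ℝ)
    (hW : Wᵀ * W = 1) (hWt : Wtᵀ * Wt = 1) :
    specNorm (W * Wᵀ - Wt * Wtᵀ) ≤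
        sInf {r : ℝ | ∃ U : Matrix (Fin k) (Fin k) ℝ, Uᵀ * U = 1 ∧ r = frob (Wt * U - W)} ∧
      sInf {r : ℝ | ∃ U : Matrix (Fin k) (Fin k) ℝ, Uᵀ * U = 1 ∧ r = frob (Wt * U - W)} ≤
        Real.sqrt (2 * k) * specNorm (W * Wᵀ - Wt * Wtᵀ) := by
  obtain ⟨U₀, hU₀, hbound⟩ := exists_orthogonal_frob_sq_le hW hWt
  constructor
  · refine le_csInf ⟨_, 1, by simp, rfl⟩ ?_
    rintro _ ⟨U, hU, rfl⟩
    exact specNorm_mul_transpose_sub_le_frob hW hWt hU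
  · refine csInf_le_of_le (b := frob (Wt * U₀ - W)) ⟨0, ?_⟩ ⟨U₀, hU₀, rfl⟩ ?_
    · rintro _ ⟨U, -, rfl⟩
      exact frob_nonneg _
    rw [← Real.sqrt_sq (frob_nonneg _), ← Real.sqrt_sq (specNorm_nonneg (W * Wᵀ - Wt * Wtᵀ)),
      ← Real.sqrt_mul (by positivity)]
    exact Real.sqrt_le_sqrt hbound
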